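/- arXiv:2110.01971 — 6 statements merged into one kernel-verified Lean document; each statement's English description precedes it below -/
import Mathlib

section
/- Let (g, R) be a Rota-Baxter Lie algebra of weight λ and (V, R_V) a representation of it, with g acting on V via ρ. Then the map ρ_{R_V} : g_R → End(V) defined by ρ_{R_V}(x)v := ρ(R(x))v + ρ(x)R_V(v) + λρ(x)v defines a representation of the Lie algebra g_R on V. -/
attribute [local instance 100] LieRing.ofAssociativeRing

/-- The bracket induced by a Rota-Baxter operator `T` of weight `lam`. -/
def rbBracket {k g : Type*} [CommRing k] [LieRing g] [LieAlgebra k g]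
    (T : g →ₗ[k] g) (lam : k) (x y : g) : g :=
  ⁅T x, y⁆ + ⁅x, T y⁆ + lam • ⁅x, y⁆

/-- The induced action of `g_T` on `V`. -/
def rbAction {k g V : Type*} [CommRing k] [LieRing g] [LieAlgebra k g]
    [AddCommGroup V] [Module k V] (ρ : g →ₗ⁅k⁆ Module.End k V)
    (T : g →ₗ[k] g) (Tv : V →ₗ[k] V) (lam : k) (x : g) (v : V) : V :=
  ρ (T x) v + ρ x (Tv v) + lam • ρ x v

/-!
The Rota–Baxter identity of `T` turns `ρ (T [x,y]_T)` into `⁅ρ (T x), ρ (T y)⁆`, and that of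
`Tv` turns `Tv (ρ_{Tv}(y) v)` into `ρ (T y) (Tv v)`. After these two substitutions both sides
are the same noncommutative polynomial in `ρ x`, `ρ y`, `ρ (T x)`, `ρ (T y)` and `Tv`.
-/

section RotaBaxterRepresentation

variable {k g V : Type*} [CommRing k] [LieRing g] [LieAlgebra k g]
  [AddCommGroup V] [Module k V] (ρ : g →ₗ⁅k⁆ Module.End k V)
  (T : g →ₗ[k] g) (Tv : V →ₗ[k] V) (lam : k)

theorem rbAction_rbBracket
    (hT : ∀ x y : g, ⁅T x, T y⁆ = T (⁅T x, y⁆ + ⁅x, T y⁆ + lam • ⁅x, y⁆)) (x y : g) (v : V) :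
    rbAction ρ T Tv lam (rbBracket T lam x y) v =
      ⁅ρ (T x), ρ (T y)⁆ v + ρ (rbBracket T lam x y) (Tv v) +
        lam • ρ (rbBracket T lam x y) v := by
  rw [rbAction, rbBracket, ← hT, LieHom.map_lie]

theorem rbAction_rbAction
    (hTv : ∀ (x : g) (v : V),
      ρ (T x) (Tv v) = Tv (ρ (T x) v + ρ x (Tv v) + lam • ρ x v)) (x y : g) (v : V) :
    rbAction ρ T Tv lam x (rbAction ρ T Tv lam y v) =
      ρ (T x) (rbAction ρ T Tv lam y v) + ρ x (ρ (T y) (Tv v)) +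
        lam • ρ x (rbAction ρ T Tv lam y v) := by
  rw [rbAction, rbAction, ← hTv]

end RotaBaxterRepresentation

/-- Let `(g, T)` be a Rota-Baxter Lie algebra of weight `lam` and `(V, Tv)`
a representation of it (with `g` acting via `ρ`).  Then
`ρ_{Tv}(x) v := ρ(T x) v + ρ(x)(Tv v) + lam • ρ(x) v` defines a representation of the
Lie algebra `g_T` (with bracket `[x,y]_T`) on `V`. -/
theorem statement3 {k g V : Type*} [CommRing k] [LieRing g] [LieAlgebra k g]
    [AddCommGroup V] [Module k V] (ρ : g →ₗ⁅k⁆ Module.End k V)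
    (T : g →ₗ[k] g) (Tv : V →ₗ[k] V) (lam : k)
    (hT : ∀ x y : g, ⁅T x, T y⁆ = T (⁅T x, y⁆ + ⁅x, T y⁆ + lam • ⁅x, y⁆))
    (hTv : ∀ (x : g) (v : V),
      ρ (T x) (Tv v) = Tv (ρ (T x) v + ρ x (Tv v) + lam • ρ x v)) :
    ∀ (x y : g) (v : V),
      rbAction ρ T Tv lam (rbBracket T lam x y) v =
        rbAction ρ T Tv lam x (rbAction ρ T Tv lam y v) -
          rbAction ρ T Tv lam y (rbAction ρ T Tv lam x v) := by
  intro x y v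
  rw [rbAction_rbBracket ρ T Tv lam hT, rbAction_rbAction ρ T Tv lam hTv,
    rbAction_rbAction ρ T Tv lam hTv]
  simp only [rbAction, rbBracket, map_add, map_smul, LieHom.map_lie, Ring.lie_def,
    LinearMap.sub_apply, Module.End.mul_apply, LinearMap.add_apply, LinearMap.smul_apply]
  module
end

section
/- Let (g,h,φ) be a morphism Lie algebra with representation (V,W,ψ). Define cochain groups C⁰ = V, Cⁿ = Hom(Λⁿg,V) ⊕ Hom(Λⁿh,W) ⊕ Hom(Λ^{n-1}g,W) for n ≥ 1, with differential δ(v) = (δ'v, δ''(ψv), 0) on C⁰ and δ(θ,γ,η) = (δ'θ, δ''γ, ψ∘θ − γ∘Λⁿφ − δ'''η) on Cⁿ, where δ', δ'', δ''' are the Chevalley-Eilenberg differentials of (g,V), (h,W), (g,W_φ) respectively. Then δ∘δ = 0. -/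
/-!
`δ ∘ δ = 0` on the first two components is `d² = 0` for the Chevalley–Eilenberg complexes of
`(g, V)` and `(h, W)`. On the third, `ψ` and `φ` intertwine the actions, so
`(θ, γ) ↦ ψ ∘ θ - γ ∘ Λφ` commutes with the differentials and the component reduces to
`δ'''(δ''' η) = 0`.

`d² = 0` itself is proved by induction on the degree through Cartan's formula
`ι_x d = L_x - d ι_x`: it gives `ι_x d d f = L_x d f - d L_x f + d d ι_x f`, where `d L_x = L_x d`
(by the same induction, using `[L_x, L_z] = L_⁅x,z⁆`) and `d d ι_x f = 0` by induction.
-/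

/-- The Chevalley–Eilenberg differential (on plain cochains), for a bracket `br` on `L`
and an action `ρ` of `L` on `M`:
`(δf)(x₁,…,x_{n+1}) = Σᵢ (-1)^{i+1} ρ(xᵢ) f(…,x̂ᵢ,…) + Σ_{i<j} (-1)^{i+j} f([xᵢ,xⱼ],…,x̂ᵢ,…,x̂ⱼ,…)`. -/
def ceD {L M : Type*} [AddCommGroup M] (br : L → L → L) (ρ : L → M → M)
    {n : ℕ} (f : (Fin n → L) → M) : (Fin (n + 1) → L) → M :=
  fun x =>
    (∑ i : Fin (n + 1), ((-1 : ℤ) ^ (i : ℕ)) • ρ (x i) (f (x ∘ i.succAbove)))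
      + ∑ i : Fin (n + 1), ∑ j : Fin (n + 1),
          if h : (i : ℕ) < (j : ℕ) then
            ((-1 : ℤ) ^ ((i : ℕ) + (j : ℕ))) • f (fun t : Fin n =>
              Fin.cons (α := fun _ => L) (br (x i) (x j))
                (fun s : Fin (n - 1) =>
                  x (j.succAbove (Fin.cast (by have := j.isLt; omega)
                    (Fin.succAbove ⟨(i : ℕ), by have := j.isLt; omega⟩ s))))
                (Fin.cast (by have := j.isLt; omega) t))
          else 0

attribute [local instance 100] LieRing.ofAssociativeRing

open Function

section Cochains

variable {k L M : Type*} [CommRing k] [LieRing L] [LieAlgebra k L] [AddCommGroup M] [Module k M]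
  (π : L →ₗ⁅k⁆ Module.End k M)

def ceDiff {n : ℕ} (f : (Fin n → L) → M) : (Fin (n + 1) → L) → M :=
  ceD (fun a b : L => ⁅a, b⁆) (fun x m => π x m) f

/-- The interior product `ι_z`. -/
def contract (z : L) {n : ℕ} (f : (Fin (n + 1) → L) → M) : (Fin n → L) → M :=
  fun y => f (Fin.cons z y)

/-- The action `L_x` of `x` on cochains. -/
def lieDeriv (x : L) {n : ℕ} (f : (Fin n → L) → M) : (Fin n → L) → M :=
  fun y => π x (f y) - ∑ q : Fin n, f (update y q ⁅x, y q⁆)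

def actionSum {n : ℕ} (f : (Fin n → L) → M) (x : Fin (n + 1) → L) : M :=
  ∑ i : Fin (n + 1), ((-1 : ℤ) ^ (i : ℕ)) • π (x i) (f (i.removeNth x))

/-- The terms of `ceD` whose bracket is `⁅x i, x j⁆` for the fixed index `i`. -/
def bracketRow {n : ℕ} (f : (Fin (n + 1) → L) → M) (x : Fin (n + 2) → L) (i : Fin (n + 2)) : M :=
  ∑ j : Fin (n + 2), if h : (i : ℕ) < (j : ℕ) then
    ((-1 : ℤ) ^ ((i : ℕ) + (j : ℕ))) •
      f (Fin.cons ⁅x i, x j⁆ ((⟨i, by omega⟩ : Fin (n + 1)).removeNth (j.removeNth x)))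
  else 0

/-- All the antisymmetry Cartan's formula needs; unlike being an `AlternatingMap`, it is easy to
check for `ceDiff π f` and `lieDeriv π x f`. -/
def AdjSwapAntisymm {n : ℕ} (G : (Fin n → L) → M) : Prop :=
  ∀ (t : ℕ) (h : t + 1 < n) (v : Fin n → L),
    G (v ∘ Equiv.swap (⟨t, by omega⟩ : Fin n) ⟨t + 1, h⟩) = -G v

lemma ceDiff_zero_apply (f : (Fin 0 → L) → M) (x : Fin 1 → L) :
    ceDiff π f x = actionSum π f x := by
  refine add_eq_left.mpr (Finset.sum_eq_zero fun i _ => Finset.sum_eq_zero fun j _ => dif_neg ?_)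
  omega

lemma ceDiff_succ_apply {n : ℕ} (f : (Fin (n + 1) → L) → M) (x : Fin (n + 2) → L) :
    ceDiff π f x = actionSum π f x + ∑ i, bracketRow f x i :=
  rfl

end Cochains

lemma Fin.removeNth_succ_cons {α : Type*} {n : ℕ} (i : Fin (n + 1)) (x : α) (p : Fin (n + 1) → α) :
    i.succ.removeNth (Fin.cons x p : Fin (n + 2) → α) = Fin.cons x (i.removeNth p) :=
  Fin.cons_comp_succ_succAbove x p i

lemma Fin.cons_cons_comp_swap_zero_one {α : Type*} {n : ℕ} (a b : α) (w : Fin n → α) :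
    (Fin.cons a (Fin.cons b w) : Fin (n + 2) → α) ∘ Equiv.swap 0 1 = Fin.cons b (Fin.cons a w) :=
  Matrix.cons_cons_comp_swap_zero_one a b w

lemma Fin.cons_comp_swap_succ_succ {α : Type*} {n : ℕ} (a : α) (w : Fin n → α) (t : ℕ)
    (h : t + 1 < n) :
    (Fin.cons a w : Fin (n + 1) → α) ∘ Equiv.swap ⟨t + 1, by omega⟩ ⟨t + 1 + 1, by omega⟩
      = Fin.cons a (w ∘ Equiv.swap ⟨t, by omega⟩ ⟨t + 1, h⟩) := by
  obtain ⟨n, rfl⟩ : ∃ n', n = n' + 1 := ⟨n - 1, by omega⟩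
  exact (Matrix.cons_swap a w ⟨t, by omega⟩ ⟨t + 1, h⟩).symm

section Antisymm

variable {L M : Type*} [AddCommGroup M]

lemma AlternatingMap.adjSwapAntisymm {k : Type*} [CommRing k] [AddCommGroup L] [Module k L]
    [Module k M] {n : ℕ} (f : L [⋀^Fin n]→ₗ[k] M) :
    AdjSwapAntisymm (⇑f) :=
  fun _ _ v => f.map_swap v (Fin.ne_of_val_ne (by simp))

namespace AdjSwapAntisymm

variable {n : ℕ}

lemma cons_cons {G : (Fin (n + 2) → L) → M} (hG : AdjSwapAntisymm G) (a b : L) (w : Fin n → L) :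
    G (Fin.cons a (Fin.cons b w)) = -G (Fin.cons b (Fin.cons a w)) := by
  have := hG 0 (by omega) (Fin.cons b (Fin.cons a w))
  rwa [show Equiv.swap (⟨0, _⟩ : Fin (n + 2)) ⟨0 + 1, _⟩ = Equiv.swap 0 1 from rfl,
    Fin.cons_cons_comp_swap_zero_one] at this

lemma contract {G : (Fin (n + 1) → L) → M} (hG : AdjSwapAntisymm G) (z : L) :
    AdjSwapAntisymm (contract z G) := by
  intro t h v
  have := hG (t + 1) (by omega) (Fin.cons z v)
  rwa [Fin.cons_comp_swap_succ_succ] at this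

lemma cons_comp_succAbove {G : (Fin (n + 1) → L) → M} (hG : AdjSwapAntisymm G)
    (q : Fin (n + 1)) (a : L) (y : Fin (n + 1) → L) :
    G (Fin.cons a (q.removeNth y)) = ((-1 : ℤ) ^ (q : ℕ)) • G (update y q a) := by
  induction n with
  | zero =>
    obtain rfl : q = 0 := Fin.fin_one_eq_zero q
    rw [← Fin.cons_self_tail y, Fin.update_cons_zero]
    simp
  | succ m ih =>
    induction q using Fin.cases with
    | zero =>
      rw [← Fin.cons_self_tail y, Fin.update_cons_zero]
      simp
    | succ q =>
      conv_lhs => rw [← Fin.cons_self_tail y]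
      rw [Fin.removeNth_succ_cons, hG.cons_cons]
      have := ih (hG.contract (y 0)) q (Fin.tail y)
      rw [_root_.contract, _root_.contract] at this
      rw [this, Fin.cons_update, Fin.cons_self_tail, Fin.val_succ, pow_succ,
        mul_neg_one, neg_smul]

lemma lieDeriv {k : Type*} [CommRing k] [LieRing L] [LieAlgebra k L] [Module k M]
    (π : L →ₗ⁅k⁆ Module.End k M) {G : (Fin n → L) → M} (hG : AdjSwapAntisymm G)
    (x : L) : AdjSwapAntisymm (lieDeriv π x G) := by
  intro t h v
  set σ := Equiv.swap (⟨t, by omega⟩ : Fin n) ⟨t + 1, h⟩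
  have hupdate (q : Fin n) : G (update (v ∘ σ) q ⁅x, (v ∘ σ) q⁆)
      = -G (update v (σ q) ⁅x, v (σ q)⁆) := by
    rw [← hG t h, update_comp_equiv, Equiv.symm_apply_apply]
    rfl
  have hswap : G (v ∘ σ) = -G v := hG t h v
  simp only [_root_.lieDeriv, hswap, hupdate, Finset.sum_neg_distrib,
    Equiv.sum_comp σ (fun p => G (update v p ⁅x, v p⁆)), map_neg]
  abel

end AdjSwapAntisymm

end Antisymm

section Cartan

variable {k L M : Type*} [CommRing k] [LieRing L] [LieAlgebra k L] [AddCommGroup M] [Module k M]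
  (π : L →ₗ⁅k⁆ Module.End k M)

lemma actionSum_cons {n : ℕ} (G : (Fin (n + 1) → L) → M) (x : L) (y : Fin (n + 1) → L) :
    actionSum π G (Fin.cons x y) = π x (G y) - actionSum π (contract x G) y := by
  simp only [actionSum, contract, Fin.sum_univ_succ (n := n + 1), Fin.cons_zero, Fin.cons_succ,
    Fin.removeNth_zero, Fin.tail_cons, Fin.removeNth_succ_cons, Fin.val_zero, pow_zero, one_smul,
    Fin.val_succ, pow_succ, mul_neg_one, neg_smul, Finset.sum_neg_distrib, sub_eq_add_neg]

lemma bracketRow_cons_zero {n : ℕ} {G : (Fin (n + 1) → L) → M} (hG : AdjSwapAntisymm G) (x : L)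
    (y : Fin (n + 1) → L) :
    bracketRow G (Fin.cons x y) 0 = -∑ q, G (update y q ⁅x, y q⁆) := by
  rw [bracketRow, Fin.sum_univ_succ, dif_neg (lt_irrefl _), zero_add, ← Finset.sum_neg_distrib]
  refine Finset.sum_congr rfl fun q _ => ?_
  have hpos : ((0 : Fin (n + 2)) : ℕ) < q.succ := Fin.succ_pos q
  rw [dif_pos hpos, Fin.cons_zero, Fin.cons_succ, Fin.removeNth_succ_cons,
    show (⟨((0 : Fin (n + 2)) : ℕ), _⟩ : Fin (n + 1)) = 0 from rfl, Fin.removeNth_zero,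
    Fin.tail_cons, hG.cons_comp_succAbove, smul_smul, Fin.val_zero, Fin.val_succ, zero_add,
    ← pow_add, show (q : ℕ) + 1 + q = 2 * q + 1 by ring, pow_succ, pow_mul, neg_one_sq, one_pow,
    one_mul, neg_one_smul]

lemma bracketRow_cons_succ {n : ℕ} {G : (Fin (n + 2) → L) → M} (hG : AdjSwapAntisymm G) (x : L)
    (y : Fin (n + 2) → L) (p : Fin (n + 2)) :
    bracketRow G (Fin.cons x y) p.succ = -bracketRow (contract x G) y p := by
  rw [bracketRow, bracketRow, Fin.sum_univ_succ, dif_neg (by simp), zero_add,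
    ← Finset.sum_neg_distrib]
  refine Finset.sum_congr rfl fun q _ => ?_
  by_cases hpq : (p : ℕ) < q
  · rw [dif_pos (by simpa using hpq), dif_pos hpq, Fin.cons_succ, Fin.cons_succ,
      Fin.removeNth_succ_cons,
      show (⟨p.succ, _⟩ : Fin (n + 2)) = (⟨p, by omega⟩ : Fin (n + 1)).succ from rfl,
      Fin.removeNth_succ_cons, hG.cons_cons, Fin.val_succ, Fin.val_succ,
      show (p : ℕ) + 1 + (q + 1) = p + q + 2 by ring, pow_add, neg_one_sq, mul_one, smul_neg]
    rfl
  · rw [dif_neg (by simpa using hpq), dif_neg hpq, neg_zero]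

lemma bracketRow_last {n : ℕ} (G : (Fin (n + 1) → L) → M) (x : Fin (n + 2) → L) :
    bracketRow G x (Fin.last (n + 1)) = 0 :=
  Finset.sum_eq_zero fun j _ => dif_neg (by simp [Nat.le_of_lt_succ j.isLt])

/-- Cartan's formula `ι_x ∘ d = L_x - d ∘ ι_x`. -/
lemma ceDiff_cons {n : ℕ} {G : (Fin (n + 1) → L) → M} (hG : AdjSwapAntisymm G) (x : L)
    (y : Fin (n + 1) → L) :
    ceDiff π G (Fin.cons x y) = lieDeriv π x G y - ceDiff π (contract x G) y := by
  have hbracket : ∑ i, bracketRow G (Fin.cons x y) i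
      = -∑ q, G (update y q ⁅x, y q⁆)
        - (ceDiff π (contract x G) y - actionSum π (contract x G) y) := by
    rw [Fin.sum_univ_succ, bracketRow_cons_zero hG]
    rcases n with _ | n
    · have hrow (p : Fin 1) : bracketRow G (Fin.cons x y) p.succ = 0 := by
        rw [Fin.fin_one_eq_zero p]
        exact bracketRow_last G _
      rw [ceDiff_zero_apply, Finset.sum_eq_zero fun p _ => hrow p]
      abel
    · rw [ceDiff_succ_apply, Finset.sum_congr rfl fun p _ => bracketRow_cons_succ hG x y p,
        Finset.sum_neg_distrib]
      abel
  rw [ceDiff_succ_apply, actionSum_cons, hbracket, lieDeriv]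
  abel

lemma contract_ceDiff {n : ℕ} {G : (Fin (n + 1) → L) → M} (hG : AdjSwapAntisymm G) (z : L) :
    contract z (ceDiff π G) = lieDeriv π z G - ceDiff π (contract z G) :=
  funext (ceDiff_cons π hG z)

lemma contract_ceDiff_of_fin_zero (G : (Fin 0 → L) → M) (z : L) :
    contract z (ceDiff π G) = lieDeriv π z G := by
  funext y
  simp [contract, ceDiff_zero_apply, actionSum, lieDeriv]

end Cartan

section Linear

variable {k L M : Type*} [CommRing k] [LieRing L] [LieAlgebra k L] [AddCommGroup M] [Module k M]
  (π : L →ₗ⁅k⁆ Module.End k M)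

lemma ceDiff_sub {n : ℕ} (f g : (Fin n → L) → M) :
    ceDiff π (f - g) = ceDiff π f - ceDiff π g := by
  have hdite (P : Prop) [Decidable P] (A B : P → M) :
      (if h : P then A h - B h else 0) = (if h : P then A h else 0) - if h : P then B h else 0 := by
    rw [dite_sub_dite, sub_zero]
  funext x
  simp only [ceDiff, ceD, Pi.sub_apply, map_sub, smul_sub, hdite, Finset.sum_sub_distrib]
  abel

lemma ceDiff_zero {n : ℕ} : ceDiff π (0 : (Fin n → L) → M) = 0 := by
  simpa using ceDiff_sub π (0 : (Fin n → L) → M) 0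

lemma ceDiff_neg {n : ℕ} (f : (Fin n → L) → M) : ceDiff π (-f) = -ceDiff π f := by
  simpa [ceDiff_zero] using ceDiff_sub π 0 f

lemma lieDeriv_sub {n : ℕ} (x : L) (f g : (Fin n → L) → M) :
    lieDeriv π x (f - g) = lieDeriv π x f - lieDeriv π x g := by
  funext y
  simp only [lieDeriv, Pi.sub_apply, map_sub, Finset.sum_sub_distrib]
  abel

end Linear

section LieDeriv

variable {k L M : Type*} [CommRing k] [LieRing L] [LieAlgebra k L] [AddCommGroup M] [Module k M]
  (π : L →ₗ⁅k⁆ Module.End k M)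

lemma LieHom.map_lie_apply (x z : L) (m : M) : π ⁅x, z⁆ m = π x (π z m) - π z (π x m) := by
  rw [LieHom.map_lie, Ring.lie_def, LinearMap.sub_apply, Module.End.mul_apply, Module.End.mul_apply]

lemma contract_lieDeriv {n : ℕ} (G : (Fin (n + 1) → L) → M) (x z : L) :
    contract z (lieDeriv π x G) = lieDeriv π x (contract z G) - contract ⁅x, z⁆ G := by
  funext y
  simp only [contract, lieDeriv, Pi.sub_apply, Fin.sum_univ_succ, Fin.cons_zero, Fin.cons_succ,
    ← Fin.cons_update, Fin.update_cons_zero]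
  abel

lemma lieDeriv_lieDeriv_apply {n : ℕ} (G : (Fin n → L) → M) (x z : L) (y : Fin n → L) :
    lieDeriv π x (lieDeriv π z G) y
      = π x (π z (G y)) - ∑ q, π x (G (update y q ⁅z, y q⁆))
        - ∑ q, π z (G (update y q ⁅x, y q⁆)) + ∑ q, G (update y q ⁅z, ⁅x, y q⁆⁆)
        + ∑ q, ∑ r ∈ Finset.univ.erase q, G (update (update y q ⁅x, y q⁆) r ⁅z, y r⁆) := by
  have hinner (q : Fin n) : ∑ r, G (update (update y q ⁅x, y q⁆) r ⁅z, update y q ⁅x, y q⁆ r⁆)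
      = G (update y q ⁅z, ⁅x, y q⁆⁆)
        + ∑ r ∈ Finset.univ.erase q, G (update (update y q ⁅x, y q⁆) r ⁅z, y r⁆) := by
    rw [← Finset.add_sum_erase _ _ (Finset.mem_univ q), update_self, update_idem]
    congr 1
    exact Finset.sum_congr rfl fun r hr => by rw [update_of_ne (Finset.ne_of_mem_erase hr)]
  simp only [lieDeriv, map_sub, map_sum, hinner, Finset.sum_sub_distrib, Finset.sum_add_distrib]
  abel

lemma AlternatingMap.lieDeriv_lieDeriv_sub {n : ℕ} (f : L [⋀^Fin n]→ₗ[k] M) (x z : L) :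
    lieDeriv π x (lieDeriv π z f) - lieDeriv π z (lieDeriv π x f) = lieDeriv π ⁅x, z⁆ f := by
  funext y
  have hcross : ∑ q, ∑ r ∈ Finset.univ.erase q, f (update (update y q ⁅x, y q⁆) r ⁅z, y r⁆)
      = ∑ q, ∑ r ∈ Finset.univ.erase q, f (update (update y q ⁅z, y q⁆) r ⁅x, y r⁆) := by
    rw [Finset.sum_comm' (t' := Finset.univ) (s' := fun r => Finset.univ.erase r)
      (fun q r => by simp [and_comm, ne_comm])]
    exact Finset.sum_congr rfl fun r _ => Finset.sum_congr rfl fun q hq => by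
      rw [update_comm (Finset.ne_of_mem_erase hq)]
  have hjacobi : ∑ q, f (update y q ⁅⁅x, z⁆, y q⁆)
      = ∑ q, f (update y q ⁅x, ⁅z, y q⁆⁆) - ∑ q, f (update y q ⁅z, ⁅x, y q⁆⁆) := by
    rw [← Finset.sum_sub_distrib]
    refine Finset.sum_congr rfl fun q _ => ?_
    rw [leibniz_lie x z (y q), f.map_update_add]
    abel
  rw [Pi.sub_apply, lieDeriv_lieDeriv_apply, lieDeriv_lieDeriv_apply, hcross, lieDeriv,
    LieHom.map_lie_apply, hjacobi]
  abel

end LieDeriv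

section Differential

variable {k L M : Type*} [CommRing k] [LieRing L] [LieAlgebra k L] [AddCommGroup M] [Module k M]
  (π : L →ₗ⁅k⁆ Module.End k M)

namespace AlternatingMap

lemma contract_eq_curryLeft {n : ℕ} (f : L [⋀^Fin (n + 1)]→ₗ[k] M) (z : L) :
    contract z ⇑f = ⇑(f.curryLeft z) :=
  funext fun y => (f.curryLeft_apply_apply z y).symm

lemma contract_neg {n : ℕ} (f : L [⋀^Fin (n + 1)]→ₗ[k] M) (z : L) :
    contract (-z) ⇑f = -contract z ⇑f := by
  rw [contract_eq_curryLeft, contract_eq_curryLeft, map_neg]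
  rfl

/-- By Cartan's formula this difference is `-d(ι_b ι_a f)(u)` (or `0` in the lowest degree),
hence antisymmetric in `a` and `b`. -/
lemma ceDiff_contract_cons_sub_lieDeriv {m : ℕ} (f : L [⋀^Fin (m + 1)]→ₗ[k] M) (a b : L)
    (u : Fin m → L) :
    ceDiff π (contract a f) (Fin.cons b u) - lieDeriv π b (contract a f) u
      = -(ceDiff π (contract b f) (Fin.cons a u) - lieDeriv π a (contract b f) u) := by
  rcases m with _ | m
  · simp [ceDiff_zero_apply, actionSum, lieDeriv, contract]
  · have hcomm : contract b (contract a ⇑f) = -contract a (contract b ⇑f) :=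
      funext fun w => f.adjSwapAntisymm.cons_cons a b w
    rw [ceDiff_cons π (f.adjSwapAntisymm.contract a), ceDiff_cons π (f.adjSwapAntisymm.contract b),
      hcomm, ceDiff_neg]
    simp only [Pi.neg_apply, sub_sub_cancel_left, neg_neg]

lemma ceDiff_cons_cons_swap {m : ℕ} (f : L [⋀^Fin (m + 1)]→ₗ[k] M) (a b : L) (u : Fin m → L) :
    ceDiff π f (Fin.cons b (Fin.cons a u)) = -ceDiff π f (Fin.cons a (Fin.cons b u)) := by
  have hexpand (a b : L) : ceDiff π f (Fin.cons a (Fin.cons b u))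
      = lieDeriv π a (contract b f) u - contract ⁅a, b⁆ f u - lieDeriv π b (contract a f) u
        - (ceDiff π (contract a f) (Fin.cons b u) - lieDeriv π b (contract a f) u) := by
    have hcontract : lieDeriv π a f (Fin.cons b u) = contract b (lieDeriv π a f) u := rfl
    rw [ceDiff_cons π f.adjSwapAntisymm, hcontract, contract_lieDeriv]
    simp only [Pi.sub_apply]
    abel
  rw [hexpand, hexpand, ceDiff_contract_cons_sub_lieDeriv π f b a, ← lie_skew, contract_neg]
  simp only [Pi.neg_apply]
  abel

lemma adjSwapAntisymm_ceDiff {n : ℕ} (f : L [⋀^Fin n]→ₗ[k] M) :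
    AdjSwapAntisymm (ceDiff π f) := by
  induction n with
  | zero => intro t h; omega
  | succ m ih =>
    rintro (_ | t) h v
    · obtain ⟨a, b, w, rfl⟩ : ∃ a b w, v = Fin.cons a (Fin.cons b w) :=
        ⟨v 0, Fin.tail v 0, Fin.tail (Fin.tail v), by simp⟩
      rw [show Equiv.swap (⟨0, _⟩ : Fin (m + 2)) ⟨0 + 1, h⟩ = Equiv.swap 0 1 from rfl,
        Fin.cons_cons_comp_swap_zero_one]
      exact ceDiff_cons_cons_swap π f a b w
    · obtain ⟨a, w, rfl⟩ : ∃ a w, v = Fin.cons a w := ⟨v 0, Fin.tail v, by simp⟩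
      rw [Fin.cons_comp_swap_succ_succ a w t (by omega), ceDiff_cons π f.adjSwapAntisymm,
        ceDiff_cons π f.adjSwapAntisymm, f.adjSwapAntisymm.lieDeriv π a t (by omega),
        contract_eq_curryLeft, ih _ t (by omega)]
      abel

lemma ceDiff_lieDeriv {n : ℕ} (f : L [⋀^Fin n]→ₗ[k] M) (x : L) :
    ceDiff π (lieDeriv π x f) = lieDeriv π x (ceDiff π f) := by
  induction n with
  | zero =>
    funext w
    have hf (v : Fin 0 → L) : f v = f 0 := congrArg f (Subsingleton.elim _ _)
    simp only [ceDiff_zero_apply, actionSum, lieDeriv, Fin.sum_univ_succ, Fin.sum_univ_zero, hf,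
      Fin.val_zero, pow_zero, one_smul, sub_zero, add_zero, update_self, LieHom.map_lie_apply]
    abel
  | succ m ih =>
    funext w
    obtain ⟨a, y, rfl⟩ : ∃ a y, w = Fin.cons a y := ⟨w 0, Fin.tail w, by simp⟩
    have hcontract : lieDeriv π x (ceDiff π f) (Fin.cons a y)
        = contract a (lieDeriv π x (ceDiff π f)) y := rfl
    rw [ceDiff_cons π (f.adjSwapAntisymm.lieDeriv π x), hcontract, contract_lieDeriv,
      contract_lieDeriv, contract_ceDiff π f.adjSwapAntisymm, contract_ceDiff π f.adjSwapAntisymm,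
      ceDiff_sub, contract_eq_curryLeft, ih, lieDeriv_sub, ← lieDeriv_lieDeriv_sub]
    simp only [Pi.sub_apply]
    abel

theorem ceDiff_ceDiff {n : ℕ} (f : L [⋀^Fin n]→ₗ[k] M) : ceDiff π (ceDiff π f) = 0 := by
  induction n with
  | zero =>
    funext w
    obtain ⟨a, y, rfl⟩ : ∃ a y, w = Fin.cons a y := ⟨w 0, Fin.tail w, by simp⟩
    rw [ceDiff_cons π (f.adjSwapAntisymm_ceDiff π), contract_ceDiff_of_fin_zero, ceDiff_lieDeriv,
      sub_self, Pi.zero_apply]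
  | succ m ih =>
    funext w
    obtain ⟨a, y, rfl⟩ : ∃ a y, w = Fin.cons a y := ⟨w 0, Fin.tail w, by simp⟩
    rw [ceDiff_cons π (f.adjSwapAntisymm_ceDiff π), contract_ceDiff π f.adjSwapAntisymm,
      ceDiff_sub, ceDiff_lieDeriv, contract_eq_curryLeft, ih, sub_zero, sub_self, Pi.zero_apply]

end AlternatingMap

end Differential

section Naturality

variable {L L' M M' F : Type*} [AddCommGroup M] [AddCommGroup M']

lemma map_ceD [FunLike F M M'] [AddMonoidHomClass F M M'] (br : L → L → L) (ρ : L → M → M)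
    (ρ' : L → M' → M') (ψ : F) (hψ : ∀ x m, ψ (ρ x m) = ρ' x (ψ m)) {n : ℕ}
    (f : (Fin n → L) → M) (y : Fin (n + 1) → L) :
    ψ (ceD br ρ f y) = ceD br ρ' (fun w => ψ (f w)) y := by
  simp only [ceD, map_add, map_sum, map_zsmul, map_zero, apply_dite ψ, hψ]

lemma ceD_comp_apply (br : L → L → L) (br' : L' → L' → L') (ρ : L' → M → M) (φ : L → L')
    (hφ : ∀ a b, φ (br a b) = br' (φ a) (φ b)) {n : ℕ} (γ : (Fin n → L') → M)
    (y : Fin (n + 1) → L) :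
    ceD br' ρ γ (fun i => φ (y i))
      = ceD br (fun x => ρ (φ x)) (fun w => γ (fun i => φ (w i))) y := by
  simp only [ceD]
  congr 1
  refine Finset.sum_congr rfl fun i _ => Finset.sum_congr rfl fun j _ => ?_
  split_ifs
  · refine congrArg _ (congrArg γ (funext fun t => ?_))
    rw [← hφ]
    exact (congrFun (Fin.comp_cons φ _ _) _).symm
  · rfl

end Naturality

/-- `(θ, γ) ↦ ψ ∘ θ - γ ∘ Λφ` is a chain map to the complex of `W_φ`. -/
lemma ceD_sub_ceD_comp_eq_ceDiff {k g h V W : Type*} [CommRing k]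
    [LieRing g] [LieAlgebra k g] [LieRing h] [LieAlgebra k h]
    [AddCommGroup V] [Module k V] [AddCommGroup W] [Module k W]
    (φ : g →ₗ⁅k⁆ h) (ρV : g →ₗ⁅k⁆ Module.End k V) (ρW : h →ₗ⁅k⁆ Module.End k W)
    (ψ : V →ₗ[k] W) (hψ : ∀ (x : g) (v : V), ψ (ρV x v) = ρW (φ x) (ψ v)) {n : ℕ}
    (θ : (Fin n → g) → V) (γ : (Fin n → h) → W) (y : Fin (n + 1) → g) :
    ψ (ceD (fun a b : g => ⁅a, b⁆) (fun x u => ρV x u) θ y)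
        - ceD (fun a b : h => ⁅a, b⁆) (fun z w => ρW z w) γ (fun i => φ (y i))
      = ceDiff (ρW.comp φ) (fun w => ψ (θ w) - γ (fun i => φ (w i))) y := by
  rw [map_ceD _ _ _ ψ hψ, ceD_comp_apply _ _ _ φ (fun a b => φ.map_lie a b)]
  exact (congrFun (ceDiff_sub (ρW.comp φ) _ _) y).symm

/-- Let `(g,h,φ)` be a morphism Lie algebra with representation `(V,W,ψ)`.
The cochain complex of the morphism Lie algebra has `C⁰ = V` and, for `n ≥ 1`,
`Cⁿ = Hom(Λⁿg,V) ⊕ Hom(Λⁿh,W) ⊕ Hom(Λ^{n-1}g,W)`, with differential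
`δ(v) = (δ'v, δ''(ψ v), 0)` on `C⁰` and
`δ(θ,γ,η) = (δ'θ, δ''γ, ψ∘θ − γ∘Λⁿφ − δ'''η)` in higher degrees,
where `δ', δ'', δ'''` are the Chevalley–Eilenberg differentials of `(g,V)`, `(h,W)` and
`(g,W_φ)`.  Then `δ ∘ δ = 0`, in every degree and in every component. -/
theorem statement8 {k g h V W : Type*} [CommRing k]
    [LieRing g] [LieAlgebra k g] [LieRing h] [LieAlgebra k h]
    [AddCommGroup V] [Module k V] [AddCommGroup W] [Module k W]
    (φ : g →ₗ⁅k⁆ h) (ρV : g →ₗ⁅k⁆ Module.End k V) (ρW : h →ₗ⁅k⁆ Module.End k W)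
    (ψ : V →ₗ[k] W)
    (hψ : ∀ (x : g) (v : V), ψ (ρV x v) = ρW (φ x) (ψ v)) :
    -- δ ∘ δ = 0 starting from C⁰ = V, where δ(v) = (δ'v, δ''(ψv), 0):
    (∀ v : V,
      ceD (fun a b : g => ⁅a, b⁆) (fun x u => ρV x u)
          (ceD (fun a b : g => ⁅a, b⁆) (fun x u => ρV x u)
            (fun _ : Fin 0 → g => v)) = 0 ∧
      ceD (fun a b : h => ⁅a, b⁆) (fun z w => ρW z w)
          (ceD (fun a b : h => ⁅a, b⁆) (fun z w => ρW z w)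
            (fun _ : Fin 0 → h => ψ v)) = 0 ∧
      (fun y : Fin 1 → g =>
          ψ (ceD (fun a b : g => ⁅a, b⁆) (fun x u => ρV x u) (fun _ : Fin 0 → g => v) y)
            - ceD (fun a b : h => ⁅a, b⁆) (fun z w => ρW z w) (fun _ : Fin 0 → h => ψ v)
                (fun i => φ (y i))
            - ceD (fun a b : g => ⁅a, b⁆) (fun x w => ρW (φ x) w)
                (0 : (Fin 0 → g) → W) y) = 0) ∧
    -- δ ∘ δ = 0 on Cⁿ for n ≥ 1, i.e. on a triple (θ, γ, η) of alternating cochains: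
    (∀ (n : ℕ) (θ : AlternatingMap k g V (Fin (n + 1)))
        (γ : AlternatingMap k h W (Fin (n + 1))) (η : AlternatingMap k g W (Fin n)),
      ceD (fun a b : g => ⁅a, b⁆) (fun x u => ρV x u)
          (ceD (fun a b : g => ⁅a, b⁆) (fun x u => ρV x u) (⇑θ)) = 0 ∧
      ceD (fun a b : h => ⁅a, b⁆) (fun z w => ρW z w)
          (ceD (fun a b : h => ⁅a, b⁆) (fun z w => ρW z w) (⇑γ)) = 0 ∧
      (fun y : Fin (n + 2) → g =>
          ψ (ceD (fun a b : g => ⁅a, b⁆) (fun x u => ρV x u) (⇑θ) y)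
            - ceD (fun a b : h => ⁅a, b⁆) (fun z w => ρW z w) (⇑γ) (fun i => φ (y i))
            - ceD (fun a b : g => ⁅a, b⁆) (fun x w => ρW (φ x) w)
                (fun y' : Fin (n + 1) → g =>
                  ψ (θ y') - γ (fun i => φ (y' i))
                    - ceD (fun a b : g => ⁅a, b⁆) (fun x w => ρW (φ x) w) (⇑η) y') y) = 0) := by
  refine ⟨fun v => ⟨?_, ?_, ?_⟩, fun n θ γ η => ⟨?_, ?_, ?_⟩⟩
  · exact (AlternatingMap.constOfIsEmpty k g (Fin 0) v).ceDiff_ceDiff ρV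
  · exact (AlternatingMap.constOfIsEmpty k h (Fin 0) (ψ v)).ceDiff_ceDiff ρW
  · funext y
    rw [ceD_sub_ceD_comp_eq_ceDiff φ ρV ρW ψ hψ]
    simp only [sub_self]
    exact sub_eq_zero.mpr rfl
  · exact θ.ceDiff_ceDiff ρV
  · exact γ.ceDiff_ceDiff ρW
  · funext y
    have hdd := congrFun (ceDiff_sub (ρW.comp φ) (fun w => ψ (θ w) - γ fun i => φ (w i))
      (ceDiff (ρW.comp φ) η)) y
    rw [η.ceDiff_ceDiff, Pi.sub_apply, Pi.zero_apply, sub_zero] at hdd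
    rw [ceD_sub_ceD_comp_eq_ceDiff φ ρV ρW ψ hψ]
    exact sub_eq_zero.mpr hdd.symm
end

section
/- Let (g,h,φ) be a morphism Lie algebra and (V,W,ψ) a representation of it. If the Chevalley-Eilenberg cohomology groups H^n_CE(g,V), H^n_CE(h,W), and H^{n-1}_CE(g,W_φ) all vanish, then the n-th cohomology group H^n_mLA(φ,ψ) of the morphism Lie algebra also vanishes. -/
attribute [local instance 100] LieRing.ofAssociativeRing

lemma ceD_sub {L M : Type*} [AddCommGroup M] (br : L → L → L) (ρ : L → M → M)
    (hρ : ∀ x (a b : M), ρ x (a - b) = ρ x a - ρ x b)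
    {n : ℕ} (f g : (Fin n → L) → M) :
    ceD br ρ (f - g) = ceD br ρ f - ceD br ρ g := by
  funext x
  simp only [ceD, Pi.sub_apply, hρ, smul_sub, Finset.sum_sub_distrib]
  rw [add_sub_add_comm]
  simp only [← Finset.sum_sub_distrib, dite_sub_dite, sub_zero]

lemma ceD_natural {L L' M M' : Type*} [AddCommGroup M] [AddCommGroup M']
    (br : L → L → L) (br' : L' → L' → L') (ρ : L → M → M) (ρ' : L' → M' → M')
    (φ : L → L') (T : M' →+ M)
    (hbr : ∀ a b, φ (br a b) = br' (φ a) (φ b))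
    (hTρ : ∀ (l : L) (m : M'), T (ρ' (φ l) m) = ρ l (T m))
    {n : ℕ} (f : (Fin n → L') → M') :
    ceD br ρ (fun y => T (f (φ ∘ y))) = fun x => T (ceD br' ρ' f (φ ∘ x)) := by
  funext x
  simp only [ceD, map_add, map_sum, map_zsmul, apply_dite (⇑T), map_zero, hTρ,
    Function.comp_apply]
  congr 1
  refine Finset.sum_congr rfl fun i _ => Finset.sum_congr rfl fun j _ => ?_
  split
  · refine congrArg _ (congrArg _ (congrArg f (funext fun t => ?_)))
    show (φ ∘ Fin.cons _ _) _ = _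
    rw [Fin.comp_cons, hbr]
    rfl
  · rfl

section MorphismLieAlgebra

variable {k g h V W : Type*} [CommRing k]
  [LieRing g] [LieAlgebra k g] [LieRing h] [LieAlgebra k h]
  [AddCommGroup V] [Module k V] [AddCommGroup W] [Module k W]
  (φ : g →ₗ⁅k⁆ h) (ρV : g →ₗ⁅k⁆ Module.End k V) (ρW : h →ₗ⁅k⁆ Module.End k W)
  (ψ : V →ₗ[k] W)

def comparisonCochain {m : ℕ} (θ : (Fin m → g) → V) (γ : (Fin m → h) → W) :
    (Fin m → g) → W :=
  fun y => ψ (θ y) - γ (fun i => φ (y i))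

lemma ceD_comparisonCochain (hψ : ∀ (x : g) (v : V), ψ (ρV x v) = ρW (φ x) (ψ v))
    {m : ℕ} (θ : (Fin m → g) → V) (γ : (Fin m → h) → W) :
    ceD (fun a b : g => ⁅a, b⁆) (fun x w => ρW (φ x) w) (comparisonCochain φ ψ θ γ) =
      comparisonCochain φ ψ (ceD (fun a b : g => ⁅a, b⁆) (fun x u => ρV x u) θ)
        (ceD (fun a b : h => ⁅a, b⁆) (fun z w => ρW z w) γ) := by
  have hpush := ceD_natural (fun a b : g => ⁅a, b⁆) (fun a b : g => ⁅a, b⁆)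
    (fun x w => ρW (φ x) w) (fun x u => ρV x u) id ψ.toAddMonoidHom
    (fun _ _ => rfl) hψ θ
  have hpull := ceD_natural (fun a b : g => ⁅a, b⁆) (fun a b : h => ⁅a, b⁆)
    (fun x w => ρW (φ x) w) (fun z w => ρW z w) φ (AddMonoidHom.id W)
    φ.map_lie (fun _ _ => rfl) γ
  exact (ceD_sub _ _ (fun x => map_sub (ρW (φ x))) _ _).trans
    (congrArg₂ (· - ·) hpush hpull)

end MorphismLieAlgebra

/-- Let `(g,h,φ)` be a morphism Lie algebra and `(V,W,ψ)` a representation.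
If the Chevalley–Eilenberg cohomologies `H^n_CE(g,V)`, `H^n_CE(h,W)` and
`H^{n-1}_CE(g,W_φ)` vanish (expressed below: every alternating cocycle is a coboundary
of an alternating cochain), then `H^n_mLA(φ,ψ)` vanishes: every `n`-cocycle
`(θ,γ,η)` of the morphism Lie algebra complex is a coboundary `δ(θ₀,γ₀,η₀)`.
(Here the degree is written as `n+2` so that all three components of cochains in
degrees `n`, `n+1`, `n+2` are alternating multilinear maps.) -/
theorem statement9 {k g h V W : Type*} [CommRing k]
    [LieRing g] [LieAlgebra k g] [LieRing h] [LieAlgebra k h]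
    [AddCommGroup V] [Module k V] [AddCommGroup W] [Module k W]
    (φ : g →ₗ⁅k⁆ h) (ρV : g →ₗ⁅k⁆ Module.End k V) (ρW : h →ₗ⁅k⁆ Module.End k W)
    (ψ : V →ₗ[k] W)
    (hψ : ∀ (x : g) (v : V), ψ (ρV x v) = ρW (φ x) (ψ v)) (n : ℕ)
    -- H^{n+2}_CE(g,V) = 0 :
    (HgV : ∀ θ : AlternatingMap k g V (Fin (n + 2)),
      ceD (fun a b : g => ⁅a, b⁆) (fun x u => ρV x u) (⇑θ) = 0 →
      ∃ θ₀ : AlternatingMap k g V (Fin (n + 1)),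
        ceD (fun a b : g => ⁅a, b⁆) (fun x u => ρV x u) (⇑θ₀) = ⇑θ)
    -- H^{n+2}_CE(h,W) = 0 :
    (HhW : ∀ γ : AlternatingMap k h W (Fin (n + 2)),
      ceD (fun a b : h => ⁅a, b⁆) (fun z w => ρW z w) (⇑γ) = 0 →
      ∃ γ₀ : AlternatingMap k h W (Fin (n + 1)),
        ceD (fun a b : h => ⁅a, b⁆) (fun z w => ρW z w) (⇑γ₀) = ⇑γ)
    -- H^{n+1}_CE(g,W_φ) = 0 :
    (HgWφ : ∀ η : AlternatingMap k g W (Fin (n + 1)),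
      ceD (fun a b : g => ⁅a, b⁆) (fun x w => ρW (φ x) w) (⇑η) = 0 →
      ∃ η₀ : AlternatingMap k g W (Fin n),
        ceD (fun a b : g => ⁅a, b⁆) (fun x w => ρW (φ x) w) (⇑η₀) = ⇑η)
    -- an (n+2)-cocycle (θ, γ, η) of the morphism Lie algebra complex:
    (θ : AlternatingMap k g V (Fin (n + 2))) (γ : AlternatingMap k h W (Fin (n + 2)))
    (η : AlternatingMap k g W (Fin (n + 1)))
    (hθ : ceD (fun a b : g => ⁅a, b⁆) (fun x u => ρV x u) (⇑θ) = 0)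
    (hγ : ceD (fun a b : h => ⁅a, b⁆) (fun z w => ρW z w) (⇑γ) = 0)
    (hη : (fun y : Fin (n + 2) → g =>
        ψ (θ y) - γ (fun i => φ (y i))
          - ceD (fun a b : g => ⁅a, b⁆) (fun x w => ρW (φ x) w) (⇑η) y) = 0) :
    -- then it is a coboundary: (θ,γ,η) = δ(θ₀,γ₀,η₀)
    ∃ (θ₀ : AlternatingMap k g V (Fin (n + 1))) (γ₀ : AlternatingMap k h W (Fin (n + 1)))
      (η₀ : AlternatingMap k g W (Fin n)),
      ceD (fun a b : g => ⁅a, b⁆) (fun x u => ρV x u) (⇑θ₀) = ⇑θ ∧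
      ceD (fun a b : h => ⁅a, b⁆) (fun z w => ρW z w) (⇑γ₀) = ⇑γ ∧
      (fun y : Fin (n + 1) → g =>
        ψ (θ₀ y) - γ₀ (fun i => φ (y i))
          - ceD (fun a b : g => ⁅a, b⁆) (fun x w => ρW (φ x) w) (⇑η₀) y) = ⇑η := by
  obtain ⟨θ₀, hθ₀⟩ := HgV θ hθ
  obtain ⟨γ₀, hγ₀⟩ := HhW γ hγ
  set η' : AlternatingMap k g W (Fin (n + 1)) :=
    ψ.compAlternatingMap θ₀ - γ₀.compLinearMap φ.toLinearMap - η
  have hη' : ⇑η' = comparisonCochain φ ψ θ₀ γ₀ - η := rfl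
  have hη'_cocycle : ceD (fun a b : g => ⁅a, b⁆) (fun x w => ρW (φ x) w) (⇑η') = 0 := by
    rw [hη', ceD_sub _ _ (fun x => map_sub (ρW (φ x))),
      ceD_comparisonCochain φ ρV ρW ψ hψ, hθ₀, hγ₀]
    exact hη
  obtain ⟨η₀, hη₀⟩ := HgWφ η' hη'_cocycle
  refine ⟨θ₀, γ₀, η₀, hθ₀, hγ₀, funext fun y => ?_⟩
  rw [hη₀, hη']
  simp only [comparisonCochain, Pi.sub_apply]
  abel
end

section
/- Let (α_t, β_t) be a formal deformation of a homomorphism (α,β) between morphism Lie algebras (g,h,φ) and (g',h',φ'). Then the linear terms (α₁, β₁, 0) form a 1-cocycle in the cochain complex of (g,h,φ) with coefficients in the representation (g',h',φ') induced by (α,β); that is, α₁[x,y] = [α(x),α₁(y)] + [α₁(x),α(y)], β₁[h,k] = [β(h),β₁(k)] + [β₁(h),β(k)], and φ'∘α₁ = β₁∘φ. -/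
open Finset

theorem Finset.Nat.sum_antidiagonal_one {M : Type*} [AddCommMonoid M] (f : ℕ × ℕ → M) :
    ∑ p ∈ antidiagonal 1, f p = f (0, 1) + f (1, 0) := by
  rw [Nat.sum_antidiagonal_succ, Nat.antidiagonal_zero, sum_singleton]

theorem lie_coeff_one_of_lie_coeff {L L' : Type*} [Bracket L L] [AddCommMonoid L']
    [Bracket L' L'] (f : ℕ → L → L') {x y : L}
    (h : f 1 ⁅x, y⁆ = ∑ p ∈ antidiagonal 1, ⁅f p.1 x, f p.2 y⁆) :
    f 1 ⁅x, y⁆ = ⁅f 0 x, f 1 y⁆ + ⁅f 1 x, f 0 y⁆ := by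
  rwa [Nat.sum_antidiagonal_one] at h

theorem statement12_general {k g h g' h' : Type*} [CommRing k]
    [LieRing g] [LieAlgebra k g] [LieRing h] [LieAlgebra k h]
    [LieRing g'] [LieAlgebra k g'] [LieRing h'] [LieAlgebra k h']
    (φ : g →ₗ⁅k⁆ h) (φ' : g' →ₗ⁅k⁆ h') (α : g →ₗ⁅k⁆ g') (β : h →ₗ⁅k⁆ h')
    (A : ℕ → (g →ₗ[k] g')) (B : ℕ → (h →ₗ[k] h'))
    (hA0 : A 0 = (α : g →ₗ[k] g')) (hB0 : B 0 = (β : h →ₗ[k] h'))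
    (hA : ∀ (n : ℕ) (x y : g),
      A n ⁅x, y⁆ = ∑ p ∈ Finset.HasAntidiagonal.antidiagonal n, ⁅A p.1 x, A p.2 y⁆)
    (hB : ∀ (n : ℕ) (z w : h),
      B n ⁅z, w⁆ = ∑ p ∈ Finset.HasAntidiagonal.antidiagonal n, ⁅B p.1 z, B p.2 w⁆)
    (hAB : ∀ (n : ℕ) (x : g), φ' (A n x) = B n (φ x)) :
    (∀ x y : g, A 1 ⁅x, y⁆ = ⁅α x, A 1 y⁆ + ⁅A 1 x, α y⁆) ∧
    (∀ z w : h, B 1 ⁅z, w⁆ = ⁅β z, B 1 w⁆ + ⁅B 1 z, β w⁆) ∧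
    (∀ x : g, φ' (A 1 x) = B 1 (φ x)) := by
  refine ⟨fun x y => ?_, fun z w => ?_, hAB 1⟩
  · simpa only [hA0, LieHom.coe_toLinearMap] using lie_coeff_one_of_lie_coeff (A · ·) (hA 1 x y)
  · simpa only [hB0, LieHom.coe_toLinearMap] using lie_coeff_one_of_lie_coeff (B · ·) (hB 1 z w)

/-- Let `(αt, βt)` be a formal deformation of a homomorphism `(α,β)`
between morphism Lie algebras `(g,h,φ)` and `(g',h',φ')`, given by coefficient families
`A i`, `B i` with `A 0 = α`, `B 0 = β`, which preserve brackets and intertwine `φ, φ'`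
coefficientwise (as formal power series).  Then the linear terms `(A 1, B 1, 0)` form a
1-cocycle in the complex of `(g,h,φ)` with coefficients in the representation
`(g',h',φ')` induced by `(α,β)`:
`A 1 [x,y] = [α x, A 1 y] + [A 1 x, α y]`, `B 1 [z,w] = [β z, B 1 w] + [B 1 z, β w]`,
and `φ' ∘ A 1 = B 1 ∘ φ`. -/
theorem statement12 {k g h g' h' : Type*} [CommRing k]
    [LieRing g] [LieAlgebra k g] [LieRing h] [LieAlgebra k h]
    [LieRing g'] [LieAlgebra k g'] [LieRing h'] [LieAlgebra k h']
    (φ : g →ₗ⁅k⁆ h) (φ' : g' →ₗ⁅k⁆ h') (α : g →ₗ⁅k⁆ g') (β : h →ₗ⁅k⁆ h')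
    (hcomm : ∀ x : g, φ' (α x) = β (φ x))
    (A : ℕ → (g →ₗ[k] g')) (B : ℕ → (h →ₗ[k] h'))
    (hA0 : A 0 = (α : g →ₗ[k] g')) (hB0 : B 0 = (β : h →ₗ[k] h'))
    (hA : ∀ (n : ℕ) (x y : g),
      A n ⁅x, y⁆ = ∑ p ∈ Finset.HasAntidiagonal.antidiagonal n, ⁅A p.1 x, A p.2 y⁆)
    (hB : ∀ (n : ℕ) (z w : h),
      B n ⁅z, w⁆ = ∑ p ∈ Finset.HasAntidiagonal.antidiagonal n, ⁅B p.1 z, B p.2 w⁆)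
    (hAB : ∀ (n : ℕ) (x : g), φ' (A n x) = B n (φ x)) :
    (∀ x y : g, A 1 ⁅x, y⁆ = ⁅α x, A 1 y⁆ + ⁅A 1 x, α y⁆) ∧
    (∀ z w : h, B 1 ⁅z, w⁆ = ⁅β z, B 1 w⁆ + ⁅B 1 z, β w⁆) ∧
    (∀ x : g, φ' (A 1 x) = B 1 (φ x)) :=
  statement12_general φ φ' α β A B hA0 hB0 hA hB hAB
end

section
/- Let (G = (g₁ →0 g₀, l₂, l₃), H = (h₁ →0 h₀, l₂', l₃'), Φ = (φ₀,φ₁,φ₂)) be a skeletal 2-term morphism sh Lie algebra. Then g₀ and h₀ are Lie algebras with brackets l₂ and l₂', φ₀ : g₀ → h₀ is a Lie algebra homomorphism, g₁ and h₁ are representations of g₀ and h₀ via l₂ and l₂', (g₁, h₁, φ₁) is a representation of the morphism Lie algebra (g₀, h₀, φ₀), and (l₃, l₃', φ₂) is a 3-cocycle in the cochain complex of (g₀, h₀, φ₀) with coefficients in (g₁, h₁, φ₁). -/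
/-!
With `d = 0` the axioms of a 2-term sh Lie algebra and of its homomorphisms are, one by one,
the claimed structures; the only computation is unfolding the Chevalley–Eilenberg differential
in low degrees. In degree 3, `δ l₃ = 0` is the higher Jacobi identity (v). In degree 2, for
an alternating `φ₂` and a skew bracket, `δ φ₂` is the cyclic sum in homomorphism axiom (iv),
which therefore reads `φ₁ ∘ l₃ - l₃' ∘ Λ³φ₀ = δ φ₂`.
-/

section VecNotation

variable {α β : Type*}

theorem vec_eta_three (y : Fin 3 → α) : ![y 0, y 1, y 2] = y := by
  funext t; fin_cases t <;> rfl

theorem Fin.cons_eq_vec_two (c : α) (g : Fin 1 → α) :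
    Fin.cons (α := fun _ => α) c g = ![c, g 0] := by
  funext t; fin_cases t <;> rfl

theorem Fin.cons_eq_vec_three (c : α) (g : Fin 2 → α) :
    Fin.cons (α := fun _ => α) c g = ![c, g 0, g 1] := by
  funext t; fin_cases t <;> rfl

theorem comp_eq_vec_two (x : β → α) (σ : Fin 2 → β) : x ∘ σ = ![x (σ 0), x (σ 1)] := by
  funext t; fin_cases t <;> rfl

theorem comp_eq_vec_three (x : β → α) (σ : Fin 3 → β) :
    x ∘ σ = ![x (σ 0), x (σ 1), x (σ 2)] :=
  (vec_eta_three (x ∘ σ)).symm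

end VecNotation

section ChevalleyEilenberg

variable {L M : Type*} [AddCommGroup M] (br : L → L → L) (ρ : L → M → M)

theorem ceD_apply_two (f : (Fin 2 → L) → M) (x : Fin 3 → L) :
    ceD br ρ f x =
      ρ (x 0) (f ![x 1, x 2]) - ρ (x 1) (f ![x 0, x 2]) + ρ (x 2) (f ![x 0, x 1])
        - f ![br (x 0) (x 1), x 2] + f ![br (x 0) (x 2), x 1]
        - f ![br (x 1) (x 2), x 0] := by
  simp only [ceD, Fin.sum_univ_succ, Fin.sum_univ_zero, Fin.cons_eq_vec_two, comp_eq_vec_two]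
  simp +decide only [↓reduceDIte, Nat.add_one_sub_one, Fin.cast_eq_self, Even.neg_pow,
    Odd.neg_one_pow, one_pow, add_zero]
  abel

theorem ceD_apply_three (f : (Fin 3 → L) → M) (x : Fin 4 → L) :
    ceD br ρ f x =
      ρ (x 0) (f ![x 1, x 2, x 3]) - ρ (x 1) (f ![x 0, x 2, x 3])
        + ρ (x 2) (f ![x 0, x 1, x 3]) - ρ (x 3) (f ![x 0, x 1, x 2])
        - f ![br (x 0) (x 1), x 2, x 3] + f ![br (x 0) (x 2), x 1, x 3]
        - f ![br (x 0) (x 3), x 1, x 2] - f ![br (x 1) (x 2), x 0, x 3]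
        + f ![br (x 1) (x 3), x 0, x 2] - f ![br (x 2) (x 3), x 0, x 1] := by
  simp only [ceD, Fin.sum_univ_succ, Fin.sum_univ_zero, Fin.cons_eq_vec_three, comp_eq_vec_three]
  simp +decide only [↓reduceDIte, Nat.add_one_sub_one, Fin.cast_eq_self, Even.neg_pow,
    Odd.neg_one_pow, one_pow, add_zero]
  abel

end ChevalleyEilenberg

namespace AlternatingMap

variable {R M N : Type*} [CommRing R] [AddCommGroup M] [Module R M] [AddCommGroup N] [Module R N]

theorem map_vec_two_swap (f : M [⋀^Fin 2]→ₗ[R] N) (a b : M) : f ![a, b] = -f ![b, a] := by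
  simpa using f.map_swap ![b, a] (show (0 : Fin 2) ≠ 1 by decide)

theorem map_vecCons_neg {n : ℕ} (f : M [⋀^Fin n.succ]→ₗ[R] N) (m : Fin n → M) (a : M) :
    f (Matrix.vecCons (-a) m) = -f (Matrix.vecCons a m) := by
  simpa using f.map_vecCons_smul m (-1) a

end AlternatingMap

theorem ceD_apply_two_of_isAlt {k L M : Type*} [CommRing k] [AddCommGroup L] [Module k L]
    [AddCommGroup M] [Module k M] {br : L →ₗ[k] L →ₗ[k] L} (hbr : br.IsAlt)
    (ρ : L → M →ₗ[k] M) (f : L [⋀^Fin 2]→ₗ[k] M) (x : Fin 3 → L) :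
    ceD (fun a b => br a b) (fun a m => ρ a m) f x =
      ρ (x 0) (f ![x 1, x 2]) + ρ (x 1) (f ![x 2, x 0]) + ρ (x 2) (f ![x 0, x 1])
        + f ![x 0, br (x 1) (x 2)] + f ![x 1, br (x 2) (x 0)] + f ![x 2, br (x 0) (x 1)] := by
  rw [ceD_apply_two, f.map_vec_two_swap (x 0) (x 2), f.map_vec_two_swap (br (x 0) (x 1)),
    ← hbr.neg (x 2) (x 0), f.map_vecCons_neg, f.map_vec_two_swap (br (x 2) (x 0)),
    f.map_vec_two_swap (br (x 1) (x 2)), map_neg]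
  abel

/-- Let `(G = (g₁ →0 g₀, l₂, l₃), H = (h₁ →0 h₀, l₂', l₃'),
Φ = (φ₀,φ₁,φ₂))` be a skeletal 2-term morphism sh Lie algebra (below, `act`/`act'`
denote the mixed-degree components `l₂ : g₀ ⊗ g₁ → g₁`, `l₂' : h₀ ⊗ h₁ → h₁`; the
hypotheses are the sh Lie and homomorphism axioms with `d = 0`, `d' = 0`).  Then `g₀`
and `h₀` are Lie algebras with brackets `l₂` and `l₂'`, `φ₀` is a Lie algebra
homomorphism, `g₁` and `h₁` are representations of `g₀` and `h₀`, `(g₁,h₁,φ₁)` is a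
representation of the morphism Lie algebra `(g₀,h₀,φ₀)`, and `(l₃,l₃',φ₂)` is a
3-cocycle of the morphism Lie algebra complex of `(g₀,h₀,φ₀)` with coefficients in
`(g₁,h₁,φ₁)`. -/
theorem statement16 {k g₀ g₁ h₀ h₁ : Type*} [CommRing k]
    [AddCommGroup g₀] [Module k g₀] [AddCommGroup g₁] [Module k g₁]
    [AddCommGroup h₀] [Module k h₀] [AddCommGroup h₁] [Module k h₁]
    (l₂ : g₀ →ₗ[k] g₀ →ₗ[k] g₀) (act : g₀ →ₗ[k] g₁ →ₗ[k] g₁)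
    (l₃ : AlternatingMap k g₀ g₁ (Fin 3))
    (l₂' : h₀ →ₗ[k] h₀ →ₗ[k] h₀) (act' : h₀ →ₗ[k] h₁ →ₗ[k] h₁)
    (l₃' : AlternatingMap k h₀ h₁ (Fin 3))
    (φ₀ : g₀ →ₗ[k] h₀) (φ₁ : g₁ →ₗ[k] h₁) (φ₂ : AlternatingMap k g₀ h₁ (Fin 2))
    -- l₂, l₂' are skew-symmetric:
    (hsk : ∀ x, l₂ x x = 0) (hsk' : ∀ z, l₂' z z = 0)
    -- sh Lie axiom (iii) for G and H (with d = 0):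
    (hiii : ∀ x y z : g₀, l₂ x (l₂ y z) + l₂ y (l₂ z x) + l₂ z (l₂ x y) = 0)
    (hiii' : ∀ x y z : h₀, l₂' x (l₂' y z) + l₂' y (l₂' z x) + l₂' z (l₂' x y) = 0)
    -- sh Lie axiom (iv) for G and H (with d = 0):
    (hiv : ∀ (x y : g₀) (p : g₁),
      act x (act y p) - act y (act x p) - act (l₂ x y) p = 0)
    (hiv' : ∀ (x y : h₀) (r : h₁),
      act' x (act' y r) - act' y (act' x r) - act' (l₂' x y) r = 0)
    -- sh Lie axiom (v) for G and H:
    (hv : ∀ x y z t : g₀,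
      act x (l₃ ![y, z, t]) - act y (l₃ ![x, z, t]) + act z (l₃ ![x, y, t])
          - act t (l₃ ![x, y, z])
        - l₃ ![l₂ x y, z, t] + l₃ ![l₂ x z, y, t] - l₃ ![l₂ x t, y, z]
        - l₃ ![l₂ y z, x, t] + l₃ ![l₂ y t, x, z] - l₃ ![l₂ z t, x, y] = 0)
    (hv' : ∀ x y z t : h₀,
      act' x (l₃' ![y, z, t]) - act' y (l₃' ![x, z, t]) + act' z (l₃' ![x, y, t])
          - act' t (l₃' ![x, y, z])
        - l₃' ![l₂' x y, z, t] + l₃' ![l₂' x z, y, t] - l₃' ![l₂' x t, y, z]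
        - l₃' ![l₂' y z, x, t] + l₃' ![l₂' y t, x, z] - l₃' ![l₂' z t, x, y] = 0)
    -- homomorphism axioms (ii), (iii), (iv) with d = d' = 0:
    (hΦii : ∀ x y : g₀, 0 = φ₀ (l₂ x y) - l₂' (φ₀ x) (φ₀ y))
    (hΦiii : ∀ (x : g₀) (p : g₁), 0 = φ₁ (act x p) - act' (φ₀ x) (φ₁ p))
    (hΦiv : ∀ x y z : g₀,
      act' (φ₀ x) (φ₂ ![y, z]) + act' (φ₀ y) (φ₂ ![z, x]) + act' (φ₀ z) (φ₂ ![x, y])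
          + φ₂ ![x, l₂ y z] + φ₂ ![y, l₂ z x] + φ₂ ![z, l₂ x y]
        = φ₁ (l₃ ![x, y, z]) - l₃' ![φ₀ x, φ₀ y, φ₀ z]) :
    -- g₀, h₀ are Lie algebras:
    ((∀ x : g₀, l₂ x x = 0) ∧
      ∀ x y z : g₀, l₂ x (l₂ y z) + l₂ y (l₂ z x) + l₂ z (l₂ x y) = 0) ∧
    ((∀ z : h₀, l₂' z z = 0) ∧
      ∀ x y z : h₀, l₂' x (l₂' y z) + l₂' y (l₂' z x) + l₂' z (l₂' x y) = 0) ∧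
    -- φ₀ is a Lie algebra homomorphism:
    (∀ x y : g₀, φ₀ (l₂ x y) = l₂' (φ₀ x) (φ₀ y)) ∧
    -- g₁, h₁ are representations of g₀, h₀:
    (∀ (x y : g₀) (p : g₁), act (l₂ x y) p = act x (act y p) - act y (act x p)) ∧
    (∀ (x y : h₀) (r : h₁), act' (l₂' x y) r = act' x (act' y r) - act' y (act' x r)) ∧
    -- (g₁, h₁, φ₁) is a representation of the morphism Lie algebra (g₀, h₀, φ₀):
    (∀ (x : g₀) (p : g₁), φ₁ (act x p) = act' (φ₀ x) (φ₁ p)) ∧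
    -- (l₃, l₃', φ₂) is a 3-cocycle of the morphism Lie algebra complex:
    ceD (fun a b : g₀ => l₂ a b) (fun x p => act x p) (⇑l₃) = 0 ∧
    ceD (fun a b : h₀ => l₂' a b) (fun z r => act' z r) (⇑l₃') = 0 ∧
    (fun y : Fin 3 → g₀ =>
      φ₁ (l₃ y) - l₃' (fun i => φ₀ (y i))
        - ceD (fun a b : g₀ => l₂ a b) (fun x r => act' (φ₀ x) r) (⇑φ₂) y) = 0 := by
  refine ⟨⟨hsk, hiii⟩, ⟨hsk', hiii'⟩, fun x y => sub_eq_zero.mp (hΦii x y).symm,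
    fun x y p => (sub_eq_zero.mp (hiv x y p)).symm,
    fun x y r => (sub_eq_zero.mp (hiv' x y r)).symm,
    fun x p => sub_eq_zero.mp (hΦiii x p).symm, ?_, ?_, ?_⟩
  · funext x
    rw [ceD_apply_three]
    exact hv (x 0) (x 1) (x 2) (x 3)
  · funext x
    rw [ceD_apply_three]
    exact hv' (x 0) (x 1) (x 2) (x 3)
  · funext y
    rw [Pi.zero_apply, ceD_apply_two_of_isAlt hsk (fun x => act' (φ₀ x)), hΦiv,
      vec_eta_three y, vec_eta_three (fun i => φ₀ (y i)), sub_self]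
end

section
/- Let (G,H,Φ) be a morphism Lie group with module (V,W,ψ). Define C⁰ = V, Cⁿ = Maps(Gⁿ,V) ⊕ Maps(Hⁿ,W) ⊕ Maps(G^{n-1},W) for n ≥ 1, with differential δ(v) = (δ'v, δ''(ψv), 0) and δ(Θ,Γ,Λ) = (δ'Θ, δ''Γ, ψ∘Θ − Γ∘Φ^{×n} − δ'''Λ), where δ', δ'', δ''' are group cohomology differentials for (G,V), (H,W), and (G,W_Φ) respectively, with W_Φ the G-module via ϱ_W(Φ(−)). Then δ∘δ = 0. -/
/-!
The complex is the mapping cone of the comparison map `(Θ, Γ) ↦ ψ ∘ Θ - Γ ∘ Φ^{×n}` from the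
cochains of `(G, V)` and `(H, W)` to those of `(G, W_Φ)`. The group cohomology differential is
natural in the group and in the module, so the comparison map is a cochain map and the third
component of `δ ∘ δ` reduces to `δ''' ∘ δ'''`. The three squares `δ' ∘ δ'`, `δ'' ∘ δ''`,
`δ''' ∘ δ'''` vanish because `gpD` is Mathlib's differential on inhomogeneous cochains.
-/

/-- The group cohomology differential (inhomogeneous cochains) for an action `ρ` of a
group `G` on an abelian group `V`:
`(δf)(g₁,…,g_{n+1}) = ρ(g₁)f(g₂,…,g_{n+1}) + Σᵢ(−1)ⁱ f(g₁,…,gᵢgᵢ₊₁,…,g_{n+1})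
  + (−1)^{n+1} f(g₁,…,gₙ)`. -/
def gpD {G V : Type*} [Monoid G] [AddCommGroup V] (ρ : G → V → V)
    {n : ℕ} (f : (Fin n → G) → V) : (Fin (n + 1) → G) → V :=
  fun x =>
    ρ (x 0) (f (fun j => x j.succ))
      + (∑ i : Fin n, ((-1 : ℤ) ^ ((i : ℕ) + 1)) • f (fun j : Fin n =>
          if (j : ℕ) < (i : ℕ) then x j.castSucc
          else if (j : ℕ) = (i : ℕ) then x j.castSucc * x j.succ
          else x j.succ))
      + ((-1 : ℤ) ^ (n + 1)) • f (fun j => x j.castSucc)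

universe u v

theorem gpD_eq_inhomogeneousCochains_d {k G : Type u} [CommRing k] [Group G] (A : Rep k G)
    {n : ℕ} (f : (Fin n → G) → A) :
    gpD (fun s a => A.ρ s a) f = (inhomogeneousCochains.d A n).hom f := by
  funext x
  have hlast : Fin.contractNth (Fin.last n) (· * ·) x = fun j : Fin n => x j.castSucc :=
    funext fun j => Fin.contractNth_apply_of_lt _ _ _ _ j.isLt
  have hsign : ∀ (m : ℕ) (a : A), ((-1 : ℤ) ^ m) • a = ((-1 : k) ^ m) • a := fun m a => by
    rw [← Int.cast_smul_eq_zsmul k]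
    push_cast
    rfl
  rw [gpD, inhomogeneousCochains.d_hom_apply, Fin.sum_univ_castSucc, hlast, add_assoc]
  simp only [hsign]
  rfl

theorem gpD_gpD_of_rep {k G : Type u} [CommRing k] [Group G] (A : Rep.{u} k G) {n : ℕ}
    (f : (Fin n → G) → A) :
    gpD (fun s a => A.ρ s a) (gpD (fun s a => A.ρ s a) f) = 0 := by
  rw [gpD_eq_inhomogeneousCochains_d, gpD_eq_inhomogeneousCochains_d]
  exact LinearMap.congr_fun
    (ModuleCat.hom_ext_iff.1 (groupCohomology.inhomogeneousCochains.d_comp_d n A)) f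

theorem gpD_map {G H V W : Type*} [Monoid G] [Monoid H] [AddCommGroup V] [AddCommGroup W]
    (φ : G →* H) (ρ : H → V → V) (σ : G → W → W) (ψ : V →+ W)
    (hψ : ∀ s v, ψ (ρ (φ s) v) = σ s (ψ v)) {n : ℕ} (f : (Fin n → H) → V) :
    gpD σ (fun y => ψ (f (φ ∘ y))) = fun x => ψ (gpD ρ f (φ ∘ x)) := by
  funext x
  have hcontract : ∀ i : Fin n, (φ ∘ fun j : Fin n =>
      if (j : ℕ) < i then x j.castSucc
      else if (j : ℕ) = i then x j.castSucc * x j.succ else x j.succ) =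
      fun j : Fin n => if (j : ℕ) < i then φ (x j.castSucc)
        else if (j : ℕ) = i then φ (x j.castSucc) * φ (x j.succ) else φ (x j.succ) :=
    fun i => funext fun j => by simp only [Function.comp_apply]; split_ifs <;> simp
  simp only [gpD, Function.comp_apply, map_add, map_sum, map_zsmul, hψ, hcontract]
  rfl

theorem gpD_gpD {G : Type u} {V : Type v} [Group G] [AddCommGroup V] [DistribMulAction G V]
    {n : ℕ} (f : (Fin n → G) → V) :
    gpD (fun s a => s • a) (gpD (fun s a => s • a) f) = 0 := by
  -- Mathlib's cochain complex needs the ring, the group and the module in one universe.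
  have : SMulCommClass (ULift.{v} G) (ULift.{max u v} ℤ) (ULift.{u} V) :=
    ⟨fun g m a => ULift.ext _ _ (smul_comm g.down m.down a.down)⟩
  let A := Rep.ofDistribMulAction (ULift.{max u v} ℤ) (ULift.{v} G) (ULift.{u} V)
  have hlift : ∀ {m : ℕ} (g : (Fin m → G) → V),
      gpD (fun s a => A.ρ s a) (fun y => AddEquiv.ulift.symm (g (MulEquiv.ulift ∘ y))) =
        fun x => AddEquiv.ulift.symm (gpD (fun s a => s • a) g (MulEquiv.ulift ∘ x)) :=
    fun g => gpD_map (MulEquiv.ulift : ULift.{v} G ≃* G).toMonoidHom _ _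
      (AddEquiv.ulift.symm : V ≃+ ULift.{u} V).toAddMonoidHom (fun _ _ => rfl) g
  funext x
  have h := congrFun (gpD_gpD_of_rep A (fun y => AddEquiv.ulift.symm (f (MulEquiv.ulift ∘ y))))
    (ULift.up ∘ x)
  rw [hlift, hlift] at h
  exact AddEquiv.ulift.symm.injective h

theorem gpD_sub {G V : Type*} [Monoid G] [AddCommGroup V] [DistribMulAction G V] {n : ℕ}
    (f g : (Fin n → G) → V) :
    gpD (fun s a => s • a) (f - g) = gpD (fun s a => s • a) f - gpD (fun s a => s • a) g := by
  funext x
  simp only [gpD, Pi.sub_apply, smul_sub, Finset.sum_sub_distrib]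
  abel

section MappingCone

variable {G H V W : Type*} [Group G] [Group H] [AddCommGroup V] [AddCommGroup W]
  [DistribMulAction G V] [DistribMulAction H W] [DistribMulAction G W] (Φ : G →* H)
  (hΦ : ∀ (s : G) (w : W), Φ s • w = s • w) (ψ : V →+ W)
  (hψ : ∀ (s : G) (v : V), ψ (s • v) = s • ψ v)
include hΦ hψ

theorem gpD_comparison {n : ℕ} (Θ : (Fin n → G) → V) (Γ : (Fin n → H) → W) :
    gpD (fun s w => s • w) (fun y => ψ (Θ y) - Γ (Φ ∘ y)) =
      fun y => ψ (gpD (fun s a => s • a) Θ y) - gpD (fun t w => t • w) Γ (Φ ∘ y) := by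
  have hΘ : gpD (fun s w => s • w) (fun y => ψ (Θ y)) =
      fun y => ψ (gpD (fun s a => s • a) Θ y) :=
    gpD_map (MonoidHom.id G) (fun s a => s • a) _ ψ hψ Θ
  have hΓ : gpD (fun s w => s • w) (fun y => Γ (Φ ∘ y)) =
      fun y => gpD (fun t w => t • w) Γ (Φ ∘ y) :=
    gpD_map Φ (fun t w => t • w) _ (AddMonoidHom.id W) hΦ Γ
  refine (gpD_sub (fun y => ψ (Θ y)) (fun y => Γ (Φ ∘ y))).trans ?_
  rw [hΘ, hΓ]
  rfl

theorem mappingCone_d_comp_d_zero (v : V) :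
    (fun y : Fin 1 → G =>
      ψ (gpD (fun s a => s • a) (fun _ : Fin 0 → G => v) y)
        - gpD (fun t w => t • w) (fun _ : Fin 0 → H => ψ v) (Φ ∘ y)
        - gpD (fun s w => s • w) (0 : (Fin 0 → G) → W) y) = 0 := by
  have hconst := gpD_comparison Φ hΦ ψ hψ (fun _ : Fin 0 → G => v) (fun _ : Fin 0 → H => ψ v)
  rw [show (fun y : Fin 0 → G => ψ v - ψ v) = 0 from funext fun _ => sub_self _] at hconst
  funext y
  exact sub_eq_zero.2 (congrFun hconst y).symm

theorem mappingCone_d_comp_d_succ {n : ℕ} (Θ : (Fin (n + 1) → G) → V)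
    (Γ : (Fin (n + 1) → H) → W) (Λ : (Fin n → G) → W) :
    (fun y : Fin (n + 2) → G =>
      ψ (gpD (fun s a => s • a) Θ y) - gpD (fun t w => t • w) Γ (Φ ∘ y)
        - gpD (fun s w => s • w)
            (fun y' => ψ (Θ y') - Γ (Φ ∘ y') - gpD (fun s w => s • w) Λ y') y) = 0 := by
  have hsplit := gpD_sub (fun y' => ψ (Θ y') - Γ (Φ ∘ y')) (gpD (fun s w => s • w) Λ)
  rw [gpD_comparison Φ hΦ ψ hψ, gpD_gpD Λ, sub_zero] at hsplit
  funext y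
  exact sub_eq_zero.2 (congrFun hsplit y).symm

end MappingCone

/-- Let `(G,H,Φ)` be a morphism Lie group with module `(V,W,ψ)`.
Define `C⁰ = V`, `Cⁿ = Maps(Gⁿ,V) ⊕ Maps(Hⁿ,W) ⊕ Maps(G^{n-1},W)` for `n ≥ 1`, with
differential `δ(v) = (δ'v, δ''(ψ v), 0)` and
`δ(Θ,Γ,Λ) = (δ'Θ, δ''Γ, ψ∘Θ − Γ∘Φ^{×n} − δ'''Λ)`, where `δ',δ'',δ'''` are the group
cohomology differentials of `(G,V)`, `(H,W)` and `(G,W_Φ)` (with `W_Φ` the `G`-module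
via `ϱW(Φ(−))`).  Then `δ ∘ δ = 0`, in every degree and every component. -/
theorem statement18 {k G H V W : Type*} [CommRing k] [Group G] [Group H]
    [AddCommGroup V] [Module k V] [AddCommGroup W] [Module k W]
    (Φ : G →* H) (ϱV : G →* (V ≃ₗ[k] V)) (ϱW : H →* (W ≃ₗ[k] W))
    (ψ : V →ₗ[k] W)
    (hψ : ∀ (s : G) (v : V), ψ (ϱV s v) = ϱW (Φ s) (ψ v)) :
    -- δ ∘ δ = 0 starting from C⁰ = V, where δ(v) = (δ'v, δ''(ψv), 0):
    (∀ v : V,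
      gpD (fun s u => ϱV s u)
          (gpD (fun s u => ϱV s u) (fun _ : Fin 0 → G => v)) = 0 ∧
      gpD (fun t w => ϱW t w)
          (gpD (fun t w => ϱW t w) (fun _ : Fin 0 → H => ψ v)) = 0 ∧
      (fun y : Fin 1 → G =>
          ψ (gpD (fun s u => ϱV s u) (fun _ : Fin 0 → G => v) y)
            - gpD (fun t w => ϱW t w) (fun _ : Fin 0 → H => ψ v) (fun i => Φ (y i))
            - gpD (fun s w => ϱW (Φ s) w) (0 : (Fin 0 → G) → W) y) = 0) ∧
    -- δ ∘ δ = 0 on Cⁿ for n ≥ 1, on a triple (Θ, Γ, Λ):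
    (∀ (n : ℕ) (Θ : (Fin (n + 1) → G) → V) (Γ : (Fin (n + 1) → H) → W)
        (Λ : (Fin n → G) → W),
      gpD (fun s u => ϱV s u) (gpD (fun s u => ϱV s u) Θ) = 0 ∧
      gpD (fun t w => ϱW t w) (gpD (fun t w => ϱW t w) Γ) = 0 ∧
      (fun y : Fin (n + 2) → G =>
          ψ (gpD (fun s u => ϱV s u) Θ y)
            - gpD (fun t w => ϱW t w) Γ (fun i => Φ (y i))
            - gpD (fun s w => ϱW (Φ s) w)
                (fun y' : Fin (n + 1) → G =>
                  ψ (Θ y') - Γ (fun i => Φ (y' i))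
                    - gpD (fun s w => ϱW (Φ s) w) Λ y') y) = 0) := by
  let : DistribMulAction G V := DistribMulAction.compHom V ϱV
  let : DistribMulAction H W := DistribMulAction.compHom W ϱW
  let : DistribMulAction G W := DistribMulAction.compHom W (ϱW.comp Φ)
  have hΦ : ∀ (s : G) (w : W), Φ s • w = s • w := fun _ _ => rfl
  exact ⟨fun v => ⟨gpD_gpD _, gpD_gpD _,
      mappingCone_d_comp_d_zero Φ hΦ ψ.toAddMonoidHom hψ v⟩,
    fun n Θ Γ Λ => ⟨gpD_gpD Θ, gpD_gpD Γ,
      mappingCone_d_comp_d_succ Φ hΦ ψ.toAddMonoidHom hψ Θ Γ Λ⟩⟩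
end
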